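/- Let H : ℝⁿ × ℝ × ℝⁿ → ℝ, (q, S, p) ↦ H(q, S, p), be continuously differentiable with (∂H/∂S)(q, S, p) > 0 everywhere, and ℱ^fr : ℝⁿ × ℝ × ℝⁿ → ℝⁿ. On N := ℝⁿ × ℝ × ℝⁿ define Δ_N(q, S, p) := {(δq, δS, δp) : −(∂H/∂S)(q, S, p)·δS = ⟨ℱ^fr(q, S, p), δq⟩} and the presymplectic form ω_N((a, σ, c), (a′, σ′, c′)) := ⟨a, c′⟩ − ⟨a′, c⟩. Then a C¹ curve (q(t), S(t), p(t)) satisfies the Hamilton-Dirac system ((q̇, Ṡ, ṗ), dH(q, S, p)) ∈ D(ω_N, Δ_N(q, S, p)) for all t, where dH identified with a vector is (∂H/∂q, ∂H/∂S, ∂H/∂p), if and only if for all t: (ṗ + ∂H/∂q)·(∂H/∂S) = (∂H/∂S)·ℱ^fr, (∂H/∂S)·Ṡ = −⟨ℱ^fr, q̇⟩, and q̇ = ∂H/∂p, where all derivatives and ℱ^fr are evaluated at (q(t), S(t), p(t)). -/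
import Mathlib


open scoped RealInnerProductSpace

noncomputable section

/-- `ℝⁿ` with the Euclidean inner product. -/
abbrev E (n : ℕ) : Type := EuclideanSpace ℝ (Fin n)

/-- The space `N = T*Q × ℝ`, with points `n = (q, S, p)`. -/
abbrev N (n : ℕ) : Type := E n × ℝ × E n

/-- Gradient `∂H/∂q` of the Hamiltonian `H(q, S, p)`. -/
noncomputable def Hq {n : ℕ} (H : E n → ℝ → E n → ℝ) (q : E n) (S : ℝ) (p : E n) : E n :=
  gradient (fun x => H x S p) q

/-- Partial derivative `∂H/∂S` of the Hamiltonian `H(q, S, p)`. -/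
noncomputable def HS {n : ℕ} (H : E n → ℝ → E n → ℝ) (q : E n) (S : ℝ) (p : E n) : ℝ :=
  deriv (fun s => H q s p) S

/-- Gradient `∂H/∂p` of the Hamiltonian `H(q, S, p)`. -/
noncomputable def Hp {n : ℕ} (H : E n → ℝ → E n → ℝ) (q : E n) (S : ℝ) (p : E n) : E n :=
  gradient (fun y => H q S y) p

/-- The Dirac structure induced by a form `ω` and a subspace `Δ`, covectors being
identified with vectors via the pairing `pair` (the Euclidean inner product). -/
def Dirac {F : Type*} (pair ω : F → F → ℝ) (Δ : Set F) : Set (F × F) :=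
  {p | p.1 ∈ Δ ∧ ∀ w ∈ Δ, pair p.2 w = ω p.1 w}

/-- Euclidean pairing on `N`. -/
def pairN {n : ℕ} (ζ w : N n) : ℝ :=
  ⟪ζ.1, w.1⟫ + ζ.2.1 * w.2.1 + ⟪ζ.2.2, w.2.2⟫

/-- Presymplectic form `ω_N((a,σ,c),(a',σ',c')) = ⟨a,c'⟩ − ⟨a',c⟩` on `N`. -/
def omegaN {n : ℕ} (x y : N n) : ℝ :=
  ⟪x.1, y.2.2⟫ - ⟪y.1, x.2.2⟫

/-- the Hamilton-Dirac system on `N = T*Q × ℝ` is equivalent to the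
implicit Hamiltonian equations for the thermodynamics of simple systems. -/
theorem statement16 {n : ℕ} (H : E n → ℝ → E n → ℝ)
    (hH : ContDiff ℝ 1 (fun x : E n × ℝ × E n => H x.1 x.2.1 x.2.2))
    (hHS : ∀ (q : E n) (S : ℝ) (p : E n), 0 < HS H q S p)
    (Ffr : E n → ℝ → E n → E n)
    (q p : ℝ → E n) (S : ℝ → ℝ)
    (hq : ContDiff ℝ 1 q) (hp : ContDiff ℝ 1 p) (hS : ContDiff ℝ 1 S) :
    (∀ t : ℝ,
      ((⟨deriv q t, deriv S t, deriv p t⟩ : N n),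
       (⟨Hq H (q t) (S t) (p t), HS H (q t) (S t) (p t), Hp H (q t) (S t) (p t)⟩ : N n)) ∈
        Dirac pairN omegaN
          {δ : N n | -(HS H (q t) (S t) (p t)) * δ.2.1 = ⟪Ffr (q t) (S t) (p t), δ.1⟫}) ↔
    (∀ t : ℝ,
      HS H (q t) (S t) (p t) • (deriv p t + Hq H (q t) (S t) (p t)) =
        HS H (q t) (S t) (p t) • Ffr (q t) (S t) (p t) ∧
      HS H (q t) (S t) (p t) * deriv S t = -⟪Ffr (q t) (S t) (p t), deriv q t⟫ ∧
      deriv q t = Hp H (q t) (S t) (p t)) := by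
  constructor
  · intro h t
    obtain ⟨hmem, hall⟩ := h t
    set T := HS H (q t) (S t) (p t) with hTdef
    set F := Ffr (q t) (S t) (p t) with hFdef
    have hT0 : T ≠ 0 := (hHS (q t) (S t) (p t)).ne'
    have key : ∀ (a c : E n),
        ⟪Hq H (q t) (S t) (p t), a⟫ - ⟪F, a⟫ + ⟪Hp H (q t) (S t) (p t), c⟫
          = ⟪deriv q t, c⟫ - ⟪a, deriv p t⟫ := by
      intro a c
      have hw : ((a, -⟪F, a⟫ / T, c) : N n) ∈
          {δ : N n | -T * δ.2.1 = ⟪F, δ.1⟫} := by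
        simp only [Set.mem_setOf_eq]
        field_simp
      have h2 := hall _ hw
      simp only [pairN, omegaN] at h2
      have hc : T * (-⟪F, a⟫ / T) = -⟪F, a⟫ := mul_div_cancel₀ _ hT0
      rw [hc] at h2
      linarith
    have hHp : Hp H (q t) (S t) (p t) = deriv q t := by
      have hv : ∀ c : E n, ⟪Hp H (q t) (S t) (p t) - deriv q t, c⟫ = 0 := by
        intro c
        have := key 0 c
        simp only [inner_zero_left, inner_zero_right, sub_zero, zero_add] at this
        rw [inner_sub_left]
        linarith
      have := hv (Hp H (q t) (S t) (p t) - deriv q t)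
      rw [inner_self_eq_zero] at this
      exact sub_eq_zero.mp this
    have hF : deriv p t + Hq H (q t) (S t) (p t) = F := by
      have hv : ∀ a : E n,
          ⟪deriv p t + Hq H (q t) (S t) (p t) - F, a⟫ = 0 := by
        intro a
        have := key a 0
        simp only [inner_zero_left, inner_zero_right, add_zero, sub_zero] at this
        rw [inner_sub_left, inner_add_left]
        have hsym : ⟪a, deriv p t⟫ = ⟪deriv p t, a⟫ := real_inner_comm _ _
        linarith [this]
      have := hv (deriv p t + Hq H (q t) (S t) (p t) - F)
      rw [inner_self_eq_zero] at this
      exact sub_eq_zero.mp this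
    refine ⟨by rw [hF], ?_, hHp.symm⟩
    simp only [Set.mem_setOf_eq] at hmem
    linarith [hmem]
  · intro h t
    obtain ⟨h1, h2, h3⟩ := h t
    set T := HS H (q t) (S t) (p t) with hTdef
    set F := Ffr (q t) (S t) (p t) with hFdef
    have hT0 : T ≠ 0 := (hHS (q t) (S t) (p t)).ne'
    have hF : deriv p t + Hq H (q t) (S t) (p t) = F :=
      smul_right_injective (E n) hT0 h1
    constructor
    · simp only [Set.mem_setOf_eq]
      linarith
    · rintro ⟨a, σ, c⟩ hw
      simp only [Set.mem_setOf_eq] at hw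
      simp only [pairN, omegaN]
      have hTσ : T * σ = -⟪F, a⟫ := by linarith
      have hFa : ⟪F, a⟫ = ⟪deriv p t, a⟫ + ⟪Hq H (q t) (S t) (p t), a⟫ := by
        rw [← hF, inner_add_left]
      have hpq : ⟪Hp H (q t) (S t) (p t), c⟫ = ⟪deriv q t, c⟫ := by rw [← h3]
      have hsym : ⟪a, deriv p t⟫ = ⟪deriv p t, a⟫ := real_inner_comm _ _
      linarith

end
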